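/- arXiv:1007.0163 — 4 statements merged into one kernel-verified Lean document; each statement's English description precedes it below -/
import Mathlib

section
/- Let d ≥ 1 and m ≥ 1 be integers and let B be a Hermitian inner product (conjugate-linear in the first argument, positive definite) on the complex vector space of homogeneous degree-m polynomials in the variables X₁,…,X_d. For u ∈ ℂ^d write ℓ_u = u₁X₁ + ⋯ + u_dX_d. Then the following are equivalent: (i) for all u, v ∈ ℂ^d, B(ℓ_u^m, ℓ_v^m) = (Σ_{i=1}^d conj(u_i)·v_i)^m; (ii) for every u ∈ ℂ^d with Σ_i |u_i|² = 1, B(ℓ_u^m, ℓ_u^m) = 1. -/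
open MvPolynomial

/-- The linear form `ℓ_u = u₁X₁ + ⋯ + u_dX_d`, raised to the `m`-th power,
as an element of the space of homogeneous degree-`m` polynomials. -/
noncomputable def ellPow (d m : ℕ) (u : Fin d → ℂ) :
    MvPolynomial.homogeneousSubmodule (Fin d) ℂ m :=
  ⟨(∑ i, MvPolynomial.C (u i) * MvPolynomial.X i) ^ m, by
    rw [MvPolynomial.mem_homogeneousSubmodule]
    have h1 : MvPolynomial.IsHomogeneous
        (∑ i, MvPolynomial.C (u i) * MvPolynomial.X i : MvPolynomial (Fin d) ℂ) 1 := by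
      apply MvPolynomial.IsHomogeneous.sum
      intro i _
      simpa using (MvPolynomial.isHomogeneous_C (Fin d) (u i)).mul
        (MvPolynomial.isHomogeneous_X ℂ i)
    simpa using h1.pow m⟩

/-!
By homogeneity, (ii) gives `B(ℓ_w^m, ℓ_w^m) = ⟨w, w⟩^m` for every `w`. For fixed `u, w`, the
difference `B(ℓ_{u + ā w}^m, ℓ_{u + b w}^m) - ⟨u + ā w, u + b w⟩^m` is a polynomial `p(a, b)`
which vanishes whenever `a = b̄`. After the substitution `a = x - iy`, `b = x + iy` it vanishes on
`ℝ²`, hence `p = 0`, and `(a, b) = (0, 1)` gives `B(ℓ_u^m, ℓ_{u+w}^m) = ⟨u, u + w⟩^m`.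
-/

open ComplexConjugate

theorem MvPolynomial.eq_zero_of_eval_conj_eq_zero {p : MvPolynomial (Fin 2) ℂ}
    (h : ∀ z : ℂ, eval ![conj z, z] p = 0) : p = 0 := by
  set q : MvPolynomial (Fin 2) ℂ := bind₁ ![X 0 - C Complex.I * X 1, X 0 + C Complex.I * X 1] p
  have hq_eval (x : Fin 2 → ℂ) :
      eval x q = eval ![x 0 - Complex.I * x 1, x 0 + Complex.I * x 1] p := by
    rw [eval, eval₂Hom_bind₁]
    congr
    ext i
    fin_cases i <;> simp
  have hq : q = 0 := by
    refine funext_set (fun _ => Set.range ((↑) : ℝ → ℂ))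
      (fun _ => Set.infinite_range_of_injective Complex.ofReal_injective) fun x hx => ?_
    obtain ⟨a, ha⟩ := hx 0 trivial
    obtain ⟨b, hb⟩ := hx 1 trivial
    rw [hq_eval, map_zero, ← ha, ← hb]
    convert h (a + Complex.I * b) using 3
    simp [sub_eq_add_neg]
  refine funext fun x => ?_
  rw [map_zero, ← map_zero (eval ![(x 0 + x 1) / 2, Complex.I * (x 0 - x 1) / 2]), ← hq, hq_eval]
  congr
  ext i
  fin_cases i <;> simp only [Fin.zero_eta, Fin.mk_one, Matrix.cons_val_zero, Matrix.cons_val_one,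
    Matrix.cons_val_fin_one]
  · linear_combination (x 0 - x 1) / 2 * Complex.I_sq
  · linear_combination (x 1 - x 0) / 2 * Complex.I_sq

theorem LinearMap.apply_sum_pow_smul_eq_eval {M : Type*} [AddCommMonoid M] [Module ℂ M]
    (B : M →ₗ⋆[ℂ] M →ₗ[ℂ] ℂ) {n : ℕ} (x y : Fin n → M) (a b : ℂ) :
    B (∑ j : Fin n, conj a ^ (j : ℕ) • x j) (∑ k : Fin n, b ^ (k : ℕ) • y k) =
      eval ![a, b]
        (∑ j : Fin n, ∑ k : Fin n, C (B (x j) (y k)) * X 0 ^ (j : ℕ) * X 1 ^ (k : ℕ)) := by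
  simp only [map_sum, LinearMap.map_smulₛₗ, map_pow, Complex.conj_conj, LinearMap.sum_apply,
    LinearMap.smul_apply, map_smul, smul_eq_mul, eval_mul, eval_C, eval_X, Finset.mul_sum,
    Matrix.cons_val_zero, Matrix.cons_val_one]
  rw [Finset.sum_comm]
  exact Finset.sum_congr rfl fun j _ => Finset.sum_congr rfl fun k _ => by ring

section dotProduct

variable {ι : Type*} [Fintype ι]

theorem star_add_smul_dotProduct_add_smul (u v : ι → ℂ) (a b : ℂ) :
    star (u + conj a • v) ⬝ᵥ (u + b • v) =
      eval ![a, b] (C (star u ⬝ᵥ u) + C (star v ⬝ᵥ u) * X 0 + C (star u ⬝ᵥ v) * X 1 +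
        C (star v ⬝ᵥ v) * X 0 * X 1) := by
  simp only [star_add, star_smul, Complex.star_def, Complex.conj_conj, dotProduct_add,
    add_dotProduct, smul_dotProduct, dotProduct_smul, smul_eq_mul, map_add, map_mul, eval_C, eval_X,
    Matrix.cons_val_zero, Matrix.cons_val_one]
  ring

theorem star_dotProduct_self (u : ι → ℂ) : star u ⬝ᵥ u = ((∑ i, ‖u i‖ ^ 2 : ℝ) : ℂ) := by
  simp [dotProduct, Complex.conj_mul']

end dotProduct

noncomputable def linearForm (d : ℕ) : (Fin d → ℂ) →ₗ[ℂ] MvPolynomial (Fin d) ℂ :=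
  Fintype.linearCombination ℂ X

theorem linearForm_apply {d : ℕ} (u : Fin d → ℂ) : linearForm d u = ∑ i, C (u i) * X i := by
  simp [linearForm, Fintype.linearCombination_apply, smul_eq_C_mul]

theorem isHomogeneous_linearForm {d : ℕ} (u : Fin d → ℂ) : (linearForm d u).IsHomogeneous 1 := by
  rw [linearForm_apply]
  exact IsHomogeneous.sum _ _ _ fun i _ => by
    simpa using (isHomogeneous_C (Fin d) (u i)).mul (isHomogeneous_X ℂ i)

noncomputable def ellPowTerm {d : ℕ} (m : ℕ) (u v : Fin d → ℂ) (k : Fin (m + 1)) :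
    homogeneousSubmodule (Fin d) ℂ m :=
  ⟨(m.choose k : ℂ) • (linearForm d v ^ (k : ℕ) * linearForm d u ^ (m - k)), by
    refine Submodule.smul_mem _ _ ?_
    have := ((isHomogeneous_linearForm v).pow k).mul ((isHomogeneous_linearForm u).pow (m - k))
    rwa [one_mul, one_mul, Nat.add_sub_cancel' k.is_le] at this⟩

section ellPow

variable {d m : ℕ}

theorem coe_ellPow (u : Fin d → ℂ) :
    (ellPow d m u : MvPolynomial (Fin d) ℂ) = linearForm d u ^ m := by
  rw [linearForm_apply]
  rfl

theorem ellPow_zero (hm : m ≠ 0) : ellPow d m 0 = 0 := by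
  ext1
  simp [coe_ellPow, hm]

theorem ellPow_smul (c : ℂ) (u : Fin d → ℂ) : ellPow d m (c • u) = c ^ m • ellPow d m u := by
  ext1
  simp [coe_ellPow, smul_pow]

theorem ellPow_add_smul (u v : Fin d → ℂ) (c : ℂ) :
    ellPow d m (u + c • v) = ∑ k : Fin (m + 1), c ^ (k : ℕ) • ellPowTerm m u v k := by
  ext1
  rw [coe_ellPow, map_add, map_smul, add_comm, add_pow, ← Fin.sum_univ_eq_sum_range]
  simp only [ellPowTerm, Submodule.coe_sum, Submodule.coe_smul, smul_eq_C_mul, map_pow,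
    map_natCast]
  exact Finset.sum_congr rfl fun k _ => by ring

variable (B : homogeneousSubmodule (Fin d) ℂ m →ₗ⋆[ℂ] homogeneousSubmodule (Fin d) ℂ m →ₗ[ℂ] ℂ)

theorem apply_ellPow_smul_self (c : ℂ) (u : Fin d → ℂ) :
    B (ellPow d m (c • u)) (ellPow d m (c • u)) =
      (‖c‖ ^ 2) ^ m * B (ellPow d m u) (ellPow d m u) := by
  simp only [ellPow_smul, LinearMap.map_smulₛₗ, LinearMap.smul_apply, map_smul, smul_eq_mul,
    map_pow, ← Complex.conj_mul', mul_pow]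
  ring

theorem apply_ellPow_self_of_unit (hm : m ≠ 0)
    (hunit : ∀ u : Fin d → ℂ, ∑ i, ‖u i‖ ^ 2 = 1 → B (ellPow d m u) (ellPow d m u) = 1)
    (w : Fin d → ℂ) : B (ellPow d m w) (ellPow d m w) = (star w ⬝ᵥ w) ^ m := by
  rcases eq_or_ne w 0 with rfl | hw
  · simp [ellPow_zero hm, hm]
  set S := ∑ i, ‖w i‖ ^ 2
  have hS : 0 < S := by
    obtain ⟨i, hi⟩ := Function.ne_iff.mp hw
    exact Finset.sum_pos' (fun i _ => by positivity)
      ⟨i, Finset.mem_univ i, pow_pos (norm_pos_iff.mpr hi) 2⟩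
  set r := √S
  have hr : (r : ℂ) ≠ 0 := by exact_mod_cast (Real.sqrt_pos.mpr hS).ne'
  have hr_sq : ‖(r : ℂ)‖ ^ 2 = S := by simp [r, Real.sq_sqrt hS.le]
  set u := (r : ℂ)⁻¹ • w
  have hu : ∑ i, ‖u i‖ ^ 2 = 1 := by
    simp only [u, Pi.smul_apply, smul_eq_mul, norm_mul, mul_pow, ← Finset.mul_sum, norm_inv,
      inv_pow, hr_sq]
    exact inv_mul_cancel₀ hS.ne'
  calc B (ellPow d m w) (ellPow d m w)
      = B (ellPow d m ((r : ℂ) • u)) (ellPow d m ((r : ℂ) • u)) := by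
        rw [smul_inv_smul₀ hr]
    _ = (star w ⬝ᵥ w) ^ m := by
        rw [apply_ellPow_smul_self, hunit u hu, mul_one, star_dotProduct_self]
        exact_mod_cast congrArg (· ^ m) hr_sq

theorem apply_ellPow_of_apply_ellPow_self
    (hdiag : ∀ w : Fin d → ℂ, B (ellPow d m w) (ellPow d m w) = (star w ⬝ᵥ w) ^ m)
    (u v : Fin d → ℂ) : B (ellPow d m u) (ellPow d m v) = (star u ⬝ᵥ v) ^ m := by
  obtain ⟨w, rfl⟩ : ∃ w, v = u + w := ⟨v - u, by abel⟩
  set p : MvPolynomial (Fin 2) ℂ :=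
    (∑ j : Fin (m + 1), ∑ k : Fin (m + 1),
      C (B (ellPowTerm m u w j) (ellPowTerm m u w k)) * X 0 ^ (j : ℕ) * X 1 ^ (k : ℕ)) -
    (C (star u ⬝ᵥ u) + C (star w ⬝ᵥ u) * X 0 + C (star u ⬝ᵥ w) * X 1 +
      C (star w ⬝ᵥ w) * X 0 * X 1) ^ m
  have hp (a b : ℂ) : eval ![a, b] p =
      B (ellPow d m (u + conj a • w)) (ellPow d m (u + b • w)) -
        (star (u + conj a • w) ⬝ᵥ (u + b • w)) ^ m := by
    rw [ellPow_add_smul, ellPow_add_smul, LinearMap.apply_sum_pow_smul_eq_eval,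
      star_add_smul_dotProduct_add_smul, map_sub, map_pow]
  have hp0 : p = 0 :=
    eq_zero_of_eval_conj_eq_zero fun z => by rw [hp, Complex.conj_conj, hdiag, sub_self]
  have h01 := hp 0 1
  rw [hp0, map_zero, eq_comm, sub_eq_zero] at h01
  simpa using h01

end ellPow

theorem stmt_1_general (d m : ℕ) (hm : 1 ≤ m)
    (B : (MvPolynomial.homogeneousSubmodule (Fin d) ℂ m) →ₗ⋆[ℂ]
         (MvPolynomial.homogeneousSubmodule (Fin d) ℂ m) →ₗ[ℂ] ℂ) :
    (∀ u v : Fin d → ℂ,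
        B (ellPow d m u) (ellPow d m v) = (∑ i, starRingEnd ℂ (u i) * v i) ^ m)
    ↔ (∀ u : Fin d → ℂ, (∑ i, ‖u i‖ ^ 2) = 1 →
        B (ellPow d m u) (ellPow d m u) = 1) := by
  change (∀ u v, B (ellPow d m u) (ellPow d m v) = (star u ⬝ᵥ v) ^ m) ↔ _
  refine ⟨fun h u hu => ?_, fun hunit => ?_⟩
  · rw [h, star_dotProduct_self, hu, Complex.ofReal_one, one_pow]
  · exact apply_ellPow_of_apply_ellPow_self B (apply_ellPow_self_of_unit B (by omega) hunit)

/-- For a Hermitian positive definite inner product `B`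
(conjugate-linear in the first argument) on the space of homogeneous degree-`m`
polynomials in `d` variables, the condition `B(ℓ_u^m, ℓ_v^m) = ⟨u,v⟩^m` for all
`u, v` is equivalent to `B(ℓ_u^m, ℓ_u^m) = 1` for all unit vectors `u`. -/
theorem stmt_1 (d m : ℕ) (hd : 1 ≤ d) (hm : 1 ≤ m)
    (B : (MvPolynomial.homogeneousSubmodule (Fin d) ℂ m) →ₗ⋆[ℂ]
         (MvPolynomial.homogeneousSubmodule (Fin d) ℂ m) →ₗ[ℂ] ℂ)
    (hherm : ∀ x y, B x y = starRingEnd ℂ (B y x))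
    (hpos : ∀ x, x ≠ 0 → 0 < (B x x).re) :
    (∀ u v : Fin d → ℂ,
        B (ellPow d m u) (ellPow d m v) = (∑ i, starRingEnd ℂ (u i) * v i) ^ m)
    ↔ (∀ u : Fin d → ℂ, (∑ i, ‖u i‖ ^ 2) = 1 →
        B (ellPow d m u) (ellPow d m u) = 1) :=
  stmt_1_general d m hm B
end

section
/- (Lemma, part b.) Fix n ≥ 1 and 1 ≤ k ≤ n, working in the polynomial ring P defined in the context. Let w ∈ P be a weight vector and i ≠ j indices such that i does not appear in w and such that every monomial of w with nonzero coefficient contains the index j exactly d times (counted with multiplicity over its variables). Write u_{ij}(s)·w = Σ_{l=0}^{d} s^l · w_l with w_l ∈ P independent of s; then w_l = 0 for l > d, and for every 0 ≤ r ≤ d the coefficient w_{d−r} is a complex scalar multiple of τ·w_r, where τ ∈ S_n is the transposition exchanging i and j. -/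
open MvPolynomial

/-- Indexing set: `k`-element subsets of `{1,…,n}`. -/
abbrev FermionIdx (n k : ℕ) := {I : Finset (Fin n) // I.card = k}

/-- The polynomial ring `P` over `ℂ` in commuting variables `X_I` indexed by
`k`-element subsets of `{1,…,n}`, modelling `S(Λ^k ℂⁿ)`. -/
abbrev FermionPoly (n k : ℕ) := MvPolynomial (FermionIdx n k) ℂ

/-- The transvection `u_{ij}(s)` acting on `P` as a `ℂ`-algebra endomorphism:
`X_I ↦ X_I` if `j ∉ I` or `{i,j} ⊆ I`, and
`X_I ↦ X_I + (−1)^c·s·X_{(I∖{j})∪{i}}` if `j ∈ I`, `i ∉ I`, where `c` is the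
number of elements of `I` strictly between `min i j` and `max i j`. -/
noncomputable def transvect (n k : ℕ) (i j : Fin n) (s : ℂ) :
    FermionPoly n k →ₐ[ℂ] FermionPoly n k :=
  MvPolynomial.aeval (fun I : FermionIdx n k =>
    if h : j ∈ I.1 ∧ i ∉ I.1 then
      MvPolynomial.X I +
        (((-1 : ℂ) ^ ((I.1.filter (fun a => min i j < a ∧ a < max i j)).card)) * s) •
          MvPolynomial.X (⟨insert i (I.1.erase j), by
            rcases h with ⟨hj, hi⟩
            have hk : 0 < I.1.card := Finset.card_pos.mpr ⟨j, hj⟩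
            rw [Finset.card_insert_of_notMem
                (fun hm => hi (Finset.mem_of_mem_erase hm)),
              Finset.card_erase_of_mem hj]
            rw [I.2] at hk ⊢
            omega⟩ : FermionIdx n k)
    else MvPolynomial.X I)

/-- The sign `ε(π, I) ∈ {±1}` of the permutation sorting the list
`(π(i₁),…,π(i_k))`, computed as `(−1)^{#inversions}`. -/
noncomputable def signEps (n : ℕ) (π : Equiv.Perm (Fin n)) (I : Finset (Fin n)) : ℂ :=
  (-1 : ℂ) ^ ((I ×ˢ I).filter (fun p => p.1 < p.2 ∧ π p.2 < π p.1)).card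

/-- The action of `π ∈ S_n` on `P` by `ℂ`-algebra automorphisms:
`π·X_I = ε(π,I)·X_{π(I)}`. -/
noncomputable def permAct (n k : ℕ) (π : Equiv.Perm (Fin n)) :
    FermionPoly n k →ₐ[ℂ] FermionPoly n k :=
  MvPolynomial.aeval (fun I : FermionIdx n k =>
    signEps n π I.1 •
      MvPolynomial.X (⟨I.1.image π, by
        rw [Finset.card_image_of_injective _ π.injective, I.2]⟩ : FermionIdx n k))

/-- The torus action `D_t` on `P`: `D_t(X_I) = (Π_{a∈I} t_a)·X_I`. -/
noncomputable def torusAct (n k : ℕ) (t : Fin n → ℂˣ) :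
    FermionPoly n k →ₐ[ℂ] FermionPoly n k :=
  MvPolynomial.aeval (fun I : FermionIdx n k =>
    (∏ a ∈ I.1, (t a : ℂ)) • MvPolynomial.X I)

/-- `w` is a weight vector of weight `r ∈ ℤⁿ` if
`D_t(w) = (Π_a t_a^{r_a})·w` for all `t ∈ (ℂˣ)ⁿ`. -/
def IsWeightVector (n k : ℕ) (w : FermionPoly n k) (r : Fin n → ℤ) : Prop :=
  ∀ t : Fin n → ℂˣ, torusAct n k t w = (∏ a, (t a : ℂ) ^ (r a)) • w

/-- The index `i` appears in `w` if some monomial of `w` with nonzero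
coefficient contains a variable `X_I` with `i ∈ I`. -/
def AppearsIn (n k : ℕ) (i : Fin n) (w : FermionPoly n k) : Prop :=
  ∃ mono ∈ w.support, ∃ I ∈ mono.support, i ∈ I.1

/-- The number of times index `j` occurs in a monomial, counted with
multiplicity over its variables. -/
def idxMultiplicity (n k : ℕ) (j : Fin n) (mono : FermionIdx n k →₀ ℕ) : ℕ :=
  ∑ I ∈ mono.support, if j ∈ I.1 then mono I else 0

/-- `S ⊆ P` is good if `⋃_{w∈S} ℂw` is stable under the `S_n`-action and every
element of `S` is a weight vector. -/
def IsGood (n k : ℕ) (S : Set (FermionPoly n k)) : Prop :=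
  (∀ π : Equiv.Perm (Fin n), ∀ w ∈ S, ∃ v ∈ S, ∃ c : ℂ, permAct n k π w = c • v) ∧
  (∀ w ∈ S, ∃ r : Fin n → ℤ, IsWeightVector n k w r)

/-!
Write `τ = (i j)` and let `D` be the torus element scaling the index `j` by `s⁻¹`. On a variable
`X_I` with `i ∉ I` one checks directly that `τ (u_{ij}(s⁻¹) X_I) = u_{ij}(s) (D X_I)`: the signs
`ε(τ, I)` and `ε(τ, (I ∖ {j}) ∪ {i})` both equal the sign `(-1)^c` of the transvection. Both sides
are algebra maps, so the identity holds on `w`; since every monomial of `w` has `j`-weight `d`,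
`D w = s^{-d} w`, whence `u_{ij}(s) w = s^d τ (u_{ij}(s⁻¹) w)` for all `s ≠ 0`. Comparing
coefficients of this identity between polynomials in `s` gives `w_l = 0` for `l > d` and
`w_{d-r} = τ w_r`.
-/

open Finset

theorem Polynomial.coeff_eq_of_eval_eq_pow_mul_eval_inv {K : Type*} [Field K] [Infinite K]
    {p q : Polynomial K} {d : ℕ} (h : ∀ s ≠ 0, p.eval s = s ^ d * q.eval s⁻¹) :
    (∀ l, d < l → p.coeff l = 0) ∧ ∀ r ≤ d, p.coeff (d - r) = q.coeff r := by
  open Polynomial in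
  set m := q.natDegree
  have hreflect : X ^ m * p = reflect (d + m) q := by
    refine eq_of_infinite_eval_eq _ _ ((Set.finite_singleton 0).infinite_compl.mono ?_)
    intro s (hs : s ≠ 0)
    have := invertibleOfNonzero (inv_ne_zero hs)
    have hq := eval₂_reflect_mul_pow (RingHom.id K) s⁻¹ (d + m) q (by omega)
    simp only [invOf_eq_inv, inv_inv, eval₂_id] at hq
    rw [Set.mem_ofPred_eq, eval_mul, eval_pow, eval_X, h s hs, ← hq, inv_pow, add_comm, pow_add]
    field_simp
  have hcoeff : ∀ l, p.coeff l = q.coeff (revAt (d + m) (l + m)) := fun l => by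
    rw [← coeff_reflect, ← hreflect, coeff_X_pow_mul]
  refine ⟨fun l hl => ?_, fun r hr => ?_⟩
  · rw [hcoeff, revAt_eq_self_of_lt (by omega), coeff_eq_zero_of_natDegree_lt (by omega)]
  · rw [hcoeff, revAt_le (by omega)]
    congr 1
    omega

theorem Module.coeff_eq_of_sum_pow_smul_eq_pow_smul_map_sum {K V : Type*} [Field K] [Infinite K]
    [AddCommGroup V] [Module K V] (T : V →ₗ[K] V) (c : ℕ → V) (N d : ℕ)
    (hpad : ∀ l, N ≤ l → c l = 0)
    (h : ∀ s : K, s ≠ 0 →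
      ∑ l ∈ range N, s ^ l • c l = s ^ d • T (∑ l ∈ range N, s⁻¹ ^ l • c l)) :
    (∀ l, d < l → c l = 0) ∧ ∀ r ≤ d, c (d - r) = T (c r) := by
  open Polynomial in
  let P : Module.Dual K V → K[X] := fun φ => ∑ l ∈ range N, monomial l (φ (c l))
  have coeff_P : ∀ φ l, (P φ).coeff l = φ (c l) := fun φ l => by
    simp only [P, finsetSum_coeff, Polynomial.coeff_monomial, sum_ite_eq', mem_range]
    split_ifs with hl
    · rfl
    · rw [hpad l (not_lt.mp hl), map_zero]
  have eval_P : ∀ φ s, (P φ).eval s = φ (∑ l ∈ range N, s ^ l • c l) := fun φ s => by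
    simp [P, eval_finsetSum, Polynomial.eval_monomial, mul_comm]
  have hP : ∀ φ : Module.Dual K V, ∀ s ≠ 0, (P φ).eval s = s ^ d * (P (φ ∘ₗ T)).eval s⁻¹ :=
    fun φ s hs => by rw [eval_P, eval_P, h s hs, map_smul, smul_eq_mul, LinearMap.comp_apply]
  refine ⟨fun l hl => ?_, fun r hr => ?_⟩
  · rw [← Module.forall_dual_apply_eq_zero_iff K]
    intro φ
    rw [← coeff_P]
    exact (coeff_eq_of_eval_eq_pow_mul_eval_inv (hP φ)).1 l hl
  · rw [← sub_eq_zero, ← Module.forall_dual_apply_eq_zero_iff K]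
    intro φ
    rw [map_sub, sub_eq_zero, ← coeff_P, (coeff_eq_of_eval_eq_pow_mul_eval_inv (hP φ)).2 r hr,
      coeff_P, LinearMap.comp_apply]

section SwapCombinatorics

variable {n : ℕ} {i j : Fin n} {A : Finset (Fin n)}

lemma Finset.image_swap_of_notMem_of_notMem (hi : i ∉ A) (hj : j ∉ A) :
    A.image (Equiv.swap i j) = A := by
  ext a
  simp only [mem_image, Equiv.swap_apply_def]
  grind

lemma Finset.image_swap_of_mem_of_notMem (hj : j ∈ A) (hi : i ∉ A) :
    A.image (Equiv.swap i j) = insert i (A.erase j) := by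
  ext a
  simp only [mem_image, mem_insert, mem_erase, Equiv.swap_apply_def]
  grind

lemma Finset.image_swap_insert_erase (hj : j ∈ A) (hi : i ∉ A) :
    (insert i (A.erase j)).image (Equiv.swap i j) = A := by
  ext a
  simp only [mem_image, mem_insert, mem_erase, Equiv.swap_apply_def]
  grind

lemma signEps_swap_of_notMem_of_notMem (hi : i ∉ A) (hj : j ∉ A) :
    signEps n (Equiv.swap i j) A = 1 := by
  rw [signEps, filter_eq_empty_iff.mpr, card_empty, pow_zero]
  rintro ⟨a, b⟩
  simp only [mem_product, Equiv.swap_apply_def]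
  grind

lemma signEps_swap_of_mem_of_notMem (hj : j ∈ A) (hi : i ∉ A) :
    signEps n (Equiv.swap i j) A = (-1) ^ #(A.filter fun a => min i j < a ∧ a < max i j) := by
  rw [signEps]
  congr 1
  -- the inversions are the pairs `{a, j}` with `a ∈ A` strictly between `i` and `j`
  rcases lt_or_gt_of_ne (show i ≠ j by rintro rfl; exact hi hj) with hij | hji
  · rw [← mul_one #(A.filter _), ← card_singleton j, ← card_product]
    congr 1
    ext ⟨a, b⟩
    simp only [mem_filter, mem_product, mem_singleton, Equiv.swap_apply_def, min_eq_left hij.le,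
      max_eq_right hij.le]
    grind
  · rw [← one_mul #(A.filter _), ← card_singleton j, ← card_product]
    congr 1
    ext ⟨a, b⟩
    simp only [mem_filter, mem_product, mem_singleton, Equiv.swap_apply_def, min_eq_right hji.le,
      max_eq_left hji.le]
    grind

lemma signEps_swap_insert_erase (hj : j ∈ A) (hi : i ∉ A) :
    signEps n (Equiv.swap i j) (insert i (A.erase j)) =
      (-1) ^ #(A.filter fun a => min i j < a ∧ a < max i j) := by
  have hij : i ≠ j := by rintro rfl; exact hi hj
  rw [Equiv.swap_comm, signEps_swap_of_mem_of_notMem (mem_insert_self i _) (by simp [hij.symm]),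
    min_comm, max_comm]
  congr 2
  ext a
  simp only [mem_filter, mem_insert, mem_erase]
  grind

end SwapCombinatorics

lemma prod_ite_pow_eq_pow_idxMultiplicity {n k : ℕ} (j : Fin n) (μ : FermionIdx n k →₀ ℕ)
    {M : Type*} [CommMonoid M] (x : M) :
    ∏ I ∈ μ.support, (if j ∈ I.1 then x else 1) ^ μ I = x ^ idxMultiplicity n k j μ := by
  rw [idxMultiplicity, ← prod_pow_eq_pow_sum]
  refine prod_congr rfl fun I _ => ?_
  split_ifs <;> simp

lemma torusAct_mulSingle_X {n k : ℕ} (j : Fin n) (t : ℂˣ) (I : FermionIdx n k) :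
    torusAct n k (Pi.mulSingle j t) (X I) = (if j ∈ I.1 then (t : ℂ) else 1) • X I := by
  rw [torusAct, aeval_X, ← Units.coe_prod, prod_pi_mulSingle']
  split_ifs <;> rfl

section Transvection

variable {n k : ℕ} {i j : Fin n}

lemma torusAct_mulSingle_eq_pow_smul (t : ℂˣ) {w : FermionPoly n k} {d : ℕ}
    (hd : ∀ μ ∈ w.support, idxMultiplicity n k j μ = d) :
    torusAct n k (Pi.mulSingle j t) w = (t : ℂ) ^ d • w := by
  conv_lhs => rw [w.as_sum]
  conv_rhs => rw [w.as_sum]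
  rw [map_sum, smul_sum]
  refine sum_congr rfl fun μ hμ => ?_
  rw [monomial_eq, Finsupp.prod, map_mul, map_prod (torusAct n k _), algHom_C, algebraMap_eq]
  simp only [map_pow, torusAct_mulSingle_X, smul_eq_C_mul]
  simp only [mul_pow, prod_mul_distrib, ← C_pow]
  rw [← map_prod C, prod_ite_pow_eq_pow_idxMultiplicity, hd μ hμ]
  ring

lemma permAct_swap_transvect_inv_X (s : ℂˣ) {I : FermionIdx n k} (hiI : i ∉ I.1) :
    permAct n k (Equiv.swap i j) (transvect n k i j ↑s⁻¹ (X I)) =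
      transvect n k i j s (torusAct n k (Pi.mulSingle j s⁻¹) (X I)) := by
  rw [torusAct_mulSingle_X]
  by_cases hjI : j ∈ I.1
  · simp only [transvect, permAct, if_pos hjI, aeval_X, dif_pos (And.intro hjI hiI), map_add,
      map_smul]
    rw [signEps_swap_of_mem_of_notMem hjI hiI, signEps_swap_insert_erase hjI hiI]
    simp only [image_swap_of_mem_of_notMem hjI hiI, image_swap_insert_erase hjI hiI]
    have hε : ((-1 : ℂ) ^ #(I.1.filter fun a => min i j < a ∧ a < max i j)) ^ 2 = 1 := by
      rw [← pow_mul, mul_comm, pow_mul, neg_one_sq, one_pow]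
    rw [Subtype.coe_eta, smul_add, smul_smul, smul_smul, add_comm]
    congr 2
    · linear_combination (s⁻¹ : ℂˣ).val * hε
    · rw [Units.val_inv_eq_inv_val]
      field_simp
  · simp only [transvect, permAct, if_neg hjI, aeval_X, one_smul,
      dif_neg (show ¬(j ∈ I.1 ∧ i ∉ I.1) from fun h => hjI h.1),
      signEps_swap_of_notMem_of_notMem hiI hjI, Finset.image_swap_of_notMem_of_notMem hiI hjI]

lemma transvect_eq_pow_smul_permAct_transvect_inv (s : ℂˣ) {w : FermionPoly n k}
    (hi : ¬ AppearsIn n k i w) {d : ℕ} (hd : ∀ μ ∈ w.support, idxMultiplicity n k j μ = d) :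
    transvect n k i j s w =
      (s : ℂ) ^ d • permAct n k (Equiv.swap i j) (transvect n k i j ↑s⁻¹ w) := by
  have hvars : ∀ I ∈ w.vars, i ∉ I.1 := fun I hI hiI => by
    obtain ⟨μ, hμ, hIμ⟩ := (mem_vars_iff_mem_support I).mp hI
    exact hi ⟨μ, hμ, I, hIμ, hiI⟩
  have hcomm := hom_congr_vars
    (f₁ := ((permAct n k (Equiv.swap i j)).comp (transvect n k i j ↑s⁻¹)).toRingHom)
    (f₂ := ((transvect n k i j s).comp (torusAct n k (Pi.mulSingle j s⁻¹))).toRingHom)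
    (by simp only [← algebraMap_eq, AlgHom.toRingHom_eq_coe, AlgHom.comp_algebraMap])
    (fun I hI _ => by
      simpa only [AlgHom.toRingHom_eq_coe, RingHom.coe_coe, AlgHom.comp_apply]
        using permAct_swap_transvect_inv_X s (hvars I hI))
    (rfl : w = w)
  simp only [AlgHom.toRingHom_eq_coe, RingHom.coe_coe, AlgHom.comp_apply] at hcomm
  rw [hcomm, torusAct_mulSingle_eq_pow_smul _ hd, map_smul, smul_smul, ← mul_pow, Units.mul_inv,
    one_pow, one_smul]

end Transvection

theorem stmt_5_general (n k : ℕ)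
    (w : FermionPoly n k)
    (i j : Fin n) (hi : ¬ AppearsIn n k i w)
    (d : ℕ) (hd : ∀ mono ∈ w.support, idxMultiplicity n k j mono = d)
    (N : ℕ) (coeffs : ℕ → FermionPoly n k)
    (hrep : ∀ s : ℂ,
      transvect n k i j s w = ∑ l ∈ Finset.range N, s ^ l • coeffs l)
    (hpad : ∀ l, N ≤ l → coeffs l = 0) :
    (∀ l : ℕ, d < l → coeffs l = 0) ∧
    (∀ r : ℕ, r ≤ d → ∃ c : ℂ,
      coeffs (d - r) = c • permAct n k (Equiv.swap i j) (coeffs r)) := by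
  obtain ⟨hvanish, hsymm⟩ := Module.coeff_eq_of_sum_pow_smul_eq_pow_smul_map_sum
    (permAct n k (Equiv.swap i j)).toLinearMap coeffs N d hpad fun s hs => by
      rw [← hrep, ← hrep]
      simpa using transvect_eq_pow_smul_permAct_transvect_inv (Units.mk0 s hs) hi hd
  exact ⟨hvanish, fun r hr => ⟨1, by rw [one_smul]; exact hsymm r hr⟩⟩

/-- Lemma, part b: if `w` is a weight vector, `i` does not appear
in `w`, and every monomial of `w` contains the index `j` exactly `d` times,
then in `u_{ij}(s)·w = Σ_l s^l·w_l` the coefficients `w_l` vanish for `l > d`,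
and `w_{d−r}` is a scalar multiple of `τ·w_r` for the transposition
`τ = (i j)`. -/
theorem stmt_5 (n k : ℕ) (hn : 1 ≤ n) (hk1 : 1 ≤ k) (hkn : k ≤ n)
    (w : FermionPoly n k) (hw : ∃ r : Fin n → ℤ, IsWeightVector n k w r)
    (i j : Fin n) (hij : i ≠ j) (hi : ¬ AppearsIn n k i w)
    (d : ℕ) (hd : ∀ mono ∈ w.support, idxMultiplicity n k j mono = d)
    (N : ℕ) (coeffs : ℕ → FermionPoly n k)
    (hrep : ∀ s : ℂ,
      transvect n k i j s w = ∑ l ∈ Finset.range N, s ^ l • coeffs l)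
    (hpad : ∀ l, N ≤ l → coeffs l = 0) :
    (∀ l : ℕ, d < l → coeffs l = 0) ∧
    (∀ r : ℕ, r ≤ d → ∃ c : ℂ,
      coeffs (d - r) = c • permAct n k (Equiv.swap i j) (coeffs r)) :=
  stmt_5_general n k w i j hi d hd N coeffs hrep hpad
end

section
/- Let n ≥ 1, let ψ be an n×n complex matrix with ψᵀ = −ψ, let g be an n×n complex unitary matrix (g·g* = 1), and set ψ' = g·ψ·gᵀ. Then Σ_{1≤i<j<k<l≤n} |ψ'_{ij}ψ'_{kl} + ψ'_{ik}ψ'_{lj} + ψ'_{il}ψ'_{jk}|² = Σ_{1≤i<j<k<l≤n} |ψ_{ij}ψ_{kl} + ψ_{ik}ψ_{lj} + ψ_{il}ψ_{jk}|². -/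
/-!
For antisymmetric `ψ` the Plücker expression `ψ_{ij}ψ_{kl} + ψ_{ik}ψ_{lj} + ψ_{il}ψ_{jk}` is the
Pfaffian of the principal `4 × 4` submatrix on `i, j, k, l`, hence an alternating function of the
four indices. Under `ψ ↦ gψgᵀ` it transforms as a 4-tensor, by the tensor power `g ⊗ g ⊗ g ⊗ g`,
which is unitary when `g` is; so the sum of its squared moduli over all index quadruples is
invariant. Being alternating, it vanishes on quadruples with a repeated index and has constant
modulus on each orbit of `S₄`, so the full sum is `4! = 24` times the sum over increasing
quadruples.
-/

open Finset Matrix Equiv Equiv.Perm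

variable {ι R : Type*}

def pluckerForm [CommRing R] (ψ : Matrix ι ι R) (v : Fin 4 → ι) : R :=
  ψ (v 0) (v 1) * ψ (v 2) (v 3) + ψ (v 0) (v 2) * ψ (v 3) (v 1) + ψ (v 0) (v 3) * ψ (v 1) (v 2)

section Alternating

variable [CommRing R] {ψ : Matrix ι ι R}

lemma pluckerForm_comp_swap_castSucc_succ (hψ : ψᵀ = -ψ) (i : Fin 3) (v : Fin 4 → ι) :
    pluckerForm ψ (v ∘ swap i.castSucc i.succ) = -pluckerForm ψ v := by
  have h a b : ψ b a = -ψ a b := by simpa using congrFun (congrFun hψ a) b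
  fin_cases i <;>
    simp only [pluckerForm, Function.comp_apply, Fin.reduceFinMk, Fin.reduceCastSucc,
      Fin.reduceSucc, swap_apply_left, swap_apply_right, swap_apply_of_ne_of_ne, ne_eq,
      Fin.reduceEq, not_false_eq_true]
  · linear_combination ψ (v 2) (v 3) * h (v 0) (v 1) + ψ (v 1) (v 2) * h (v 0) (v 3)
      + ψ (v 0) (v 2) * h (v 1) (v 3)
  · linear_combination ψ (v 0) (v 2) * h (v 1) (v 3) + ψ (v 0) (v 1) * h (v 2) (v 3)
      + ψ (v 0) (v 3) * h (v 1) (v 2)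
  · linear_combination ψ (v 0) (v 1) * h (v 2) (v 3) + ψ (v 0) (v 3) * h (v 1) (v 2)
      + ψ (v 0) (v 2) * h (v 1) (v 3)

lemma pluckerForm_comp_perm (hψ : ψᵀ = -ψ) (σ : Perm (Fin 4)) (v : Fin 4 → ι) :
    pluckerForm ψ (v ∘ σ) = sign σ • pluckerForm ψ v := by
  have hσ : σ ∈ Submonoid.closure (Set.range fun i : Fin 3 ↦ swap i.castSucc i.succ) := by
    rw [mclosure_swap_castSucc_succ]; trivial
  induction hσ using Submonoid.closure_induction generalizing v with
  | mem _ h =>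
    obtain ⟨i, rfl⟩ := h
    simp [pluckerForm_comp_swap_castSucc_succ hψ, sign_swap Fin.castSucc_lt_succ.ne]
  | one => simp
  | mul σ τ _ _ hσ hτ =>
    rw [Perm.coe_mul, ← Function.comp_assoc, hτ, hσ, map_mul, mul_comm, mul_smul]

lemma pluckerForm_eq_zero_of_not_injective [IsAddTorsionFree R] (hψ : ψᵀ = -ψ)
    {v : Fin 4 → ι} (hv : ¬ v.Injective) : pluckerForm ψ v = 0 := by
  obtain ⟨i, j, hvij, hij⟩ : ∃ i j, v i = v j ∧ i ≠ j := by
    simpa [Function.Injective] using hv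
  have hswap : v ∘ swap i j = v := by
    rw [comp_swap_eq_update, hvij, Function.update_eq_self, ← hvij, Function.update_eq_self]
  have := pluckerForm_comp_perm hψ (swap i j) v
  rw [hswap, sign_swap hij, Units.neg_smul, one_smul] at this
  exact self_eq_neg.mp this

end Alternating

section Counting

open scoped Classical

variable [LinearOrder ι] {M : Type*} [AddCommMonoid M] {k : ℕ}

lemma sort_comp_perm_of_strictMono {w : Fin k → ι} (hw : StrictMono w) (σ : Perm (Fin k)) :
    Tuple.sort (w ∘ σ) = σ⁻¹ := by
  have hsorted : (w ∘ σ) ∘ Tuple.sort (w ∘ σ) = w := by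
    rw [Tuple.comp_perm_comp_sort_eq_comp_sort, Tuple.sort_eq_refl_iff_monotone.mpr hw.monotone]
    rfl
  exact eq_inv_of_mul_eq_one_right (Perm.ext fun i => hw.injective (congrFun hsorted i))

lemma sum_filter_injective_eq_sum_perm_strictMono [Fintype ι] (f : (Fin k → ι) → M) :
    ∑ v ∈ univ.filter Function.Injective, f v
      = ∑ σ : Perm (Fin k), ∑ w ∈ univ.filter StrictMono, f (w ∘ σ) := by
  rw [← sum_product']
  refine sum_nbij' (fun v => ((Tuple.sort v)⁻¹, v ∘ Tuple.sort v)) (fun p => p.2 ∘ p.1)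
    ?_ ?_ ?_ ?_ (fun _ _ => by simp [Function.comp_assoc])
  · intro v hv
    simp only [mem_filter, mem_univ, true_and, mem_product] at hv ⊢
    exact (Tuple.monotone_sort v).strictMono_of_injective (hv.comp (Tuple.sort v).injective)
  · intro p hp
    simp only [mem_filter, mem_univ, true_and, mem_product] at hp ⊢
    exact hp.injective.comp p.1.injective
  · intro v _
    simp [Function.comp_assoc]
  · rintro ⟨σ, w⟩ hp
    simp only [mem_filter, mem_univ, true_and, mem_product] at hp
    simp [sort_comp_perm_of_strictMono hp, Function.comp_assoc]

lemma sum_eq_factorial_smul_sum_strictMono [Fintype ι] (f : (Fin k → ι) → M)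
    (hperm : ∀ σ : Perm (Fin k), ∀ v, f (v ∘ σ) = f v)
    (hinj : ∀ v, ¬ v.Injective → f v = 0) :
    ∑ v, f v = k.factorial • ∑ w ∈ univ.filter StrictMono, f w := by
  rw [← sum_filter_of_ne fun v _ hv => not_not.mp (mt (hinj v) hv),
    sum_filter_injective_eq_sum_perm_strictMono]
  simp_rw [hperm]
  rw [sum_const, card_univ, Fintype.card_perm, Fintype.card_fin]

end Counting

section Quadruples

def quadrupleEquiv : ι × ι × ι × ι ≃ (Fin 4 → ι) where
  toFun q := ![q.1, q.2.1, q.2.2.1, q.2.2.2]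
  invFun v := (v 0, v 1, v 2, v 3)
  left_inv _ := rfl
  right_inv v := by ext i; fin_cases i <;> rfl

lemma sum_fin_four_arrow [Fintype ι] {M : Type*} [AddCommMonoid M] (f : (Fin 4 → ι) → M) :
    ∑ v, f v = ∑ a, ∑ b, ∑ c, ∑ d, f ![a, b, c, d] := by
  rw [← quadrupleEquiv.sum_comp]
  simp only [Fintype.sum_prod_type]
  rfl

open scoped Classical in
lemma sum_filter_strictMono_fin_four [Fintype ι] [LinearOrder ι] {M : Type*} [AddCommMonoid M]
    (f : (Fin 4 → ι) → M) :
    ∑ v ∈ univ.filter StrictMono, f v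
      = ∑ q ∈ univ.filter
          (fun q : ι × ι × ι × ι => q.1 < q.2.1 ∧ q.2.1 < q.2.2.1 ∧ q.2.2.1 < q.2.2.2),
          f ![q.1, q.2.1, q.2.2.1, q.2.2.2] := by
  refine (sum_equiv quadrupleEquiv (fun q => ?_) fun _ _ => rfl).symm
  simp only [mem_filter, mem_univ, true_and]
  show _ ↔ StrictMono ![q.1, q.2.1, q.2.2.1, q.2.2.2]
  simp [strictMono_vecCons]

end Quadruples

namespace Matrix

variable [CommRing R] (κ : Type*) [Fintype κ]

def tensorPow (g : Matrix ι ι R) : Matrix (κ → ι) (κ → ι) R :=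
  fun v w => ∏ i, g (v i) (w i)

variable {κ} [DecidableEq κ] {g : Matrix ι ι R}

lemma tensorPow_mul_conjTranspose [StarRing R] [Fintype ι] [DecidableEq ι]
    (hg : g * gᴴ = 1) : tensorPow κ g * (tensorPow κ g)ᴴ = 1 := by
  ext v w
  have hrow i : ∑ a, g (v i) a * star (g (w i) a) = if v i = w i then 1 else 0 := by
    rw [← one_apply, ← hg, mul_apply]; rfl
  simp only [mul_apply, conjTranspose_apply, tensorPow, star_prod, ← prod_mul_distrib]
  rw [← Fintype.prod_sum fun i a => g (v i) a * star (g (w i) a)]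
  simp only [hrow, prod_boole, mem_univ, true_implies, one_apply, funext_iff]

lemma tensorPow_mulVec_comp [Fintype ι] (σ : Perm κ) (x : (κ → ι) → R) (v : κ → ι) :
    (tensorPow κ g *ᵥ x) (v ∘ σ) = (tensorPow κ g *ᵥ fun w => x (w ∘ σ)) v := by
  have hU w : tensorPow κ g v w = tensorPow κ g (v ∘ σ) (w ∘ σ) := (Equiv.prod_comp σ _).symm
  simp only [mulVec, dotProduct, hU]
  exact (Fintype.sum_equiv (σ.arrowCongr (.refl ι)).symm _ _ fun w => rfl).symm

end Matrix

section Transformation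

variable [CommRing R] [Fintype ι]

def tensorSquare (ψ : Matrix ι ι R) (v : Fin 4 → ι) : R :=
  ψ (v 0) (v 1) * ψ (v 2) (v 3)

lemma mul_mul_transpose_apply (g ψ : Matrix ι ι R) (x y : ι) :
    (g * ψ * gᵀ) x y = ∑ a, ∑ b, g x a * g y b * ψ a b := by
  simp only [Matrix.mul_apply, transpose_apply, sum_mul]
  rw [sum_comm]
  exact sum_congr rfl fun _ _ => sum_congr rfl fun _ _ => by ring

lemma tensorSquare_mul_mul_transpose (g ψ : Matrix ι ι R) :
    tensorSquare (g * ψ * gᵀ) = tensorPow (Fin 4) g *ᵥ tensorSquare ψ := by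
  ext v
  simp only [tensorSquare, mul_mul_transpose_apply, mulVec, dotProduct, sum_fin_four_arrow,
    tensorPow, Fin.prod_univ_four, sum_mul_sum]
  refine sum_congr rfl fun a _ => ?_
  rw [sum_comm]
  refine sum_congr rfl fun b _ => sum_congr rfl fun c _ => sum_congr rfl fun d _ => ?_
  simp only [Matrix.cons_val]
  ring

omit [Fintype ι] in
lemma pluckerForm_eq_tensorSquare_add (ψ : Matrix ι ι R) :
    pluckerForm ψ = tensorSquare ψ
      + (fun v => tensorSquare ψ (v ∘ ⇑(swap 1 2 * swap 2 3 : Perm (Fin 4))))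
      + fun v => tensorSquare ψ (v ∘ ⇑(swap 2 3 * swap 1 2 : Perm (Fin 4))) := by
  ext v
  simp [pluckerForm, tensorSquare, swap_apply_of_ne_of_ne]

lemma pluckerForm_mul_mul_transpose (g ψ : Matrix ι ι R) :
    pluckerForm (g * ψ * gᵀ) = tensorPow (Fin 4) g *ᵥ pluckerForm ψ := by
  ext v
  rw [pluckerForm_eq_tensorSquare_add, pluckerForm_eq_tensorSquare_add, mulVec_add, mulVec_add]
  simp only [Pi.add_apply, tensorSquare_mul_mul_transpose, tensorPow_mulVec_comp]

end Transformation

lemma sum_norm_sq_mulVec_of_mul_conjTranspose_eq_one {𝕜 m : Type*} [RCLike 𝕜] [Fintype m]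
    [DecidableEq m] {U : Matrix m m 𝕜} (hU : U * Uᴴ = 1) (x : m → 𝕜) :
    ∑ i, ‖(U *ᵥ x) i‖ ^ 2 = ∑ i, ‖x i‖ ^ 2 := by
  have hU' : toEuclideanCLM (n := m) (𝕜 := 𝕜) U ∈ unitary _ :=
    Unitary.map_mem _ (mem_unitaryGroup_iff.mpr hU)
  have := congrArg (· ^ 2) (ContinuousLinearMap.norm_map_of_mem_unitary hU' (WithLp.toLp 2 x))
  simpa only [toEuclideanCLM_toLp, EuclideanSpace.norm_sq_eq] using this

lemma sum_norm_sq_pluckerForm {𝕜 : Type*} [RCLike 𝕜] [Fintype ι] [LinearOrder ι]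
    {ψ : Matrix ι ι 𝕜} (hψ : ψᵀ = -ψ) :
    ∑ v, ‖pluckerForm ψ v‖ ^ 2
      = 24 * ∑ q ∈ univ.filter
          (fun q : ι × ι × ι × ι => q.1 < q.2.1 ∧ q.2.1 < q.2.2.1 ∧ q.2.2.1 < q.2.2.2),
          ‖pluckerForm ψ ![q.1, q.2.1, q.2.2.1, q.2.2.2]‖ ^ 2 := by
  classical
  rw [sum_eq_factorial_smul_sum_strictMono _ (fun σ v => ?_) (fun v hv => ?_),
    sum_filter_strictMono_fin_four, nsmul_eq_mul]
  · norm_num [Nat.factorial]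
  · rcases Int.units_eq_one_or (sign σ) with h | h <;> simp [pluckerForm_comp_perm hψ, h]
  · rw [pluckerForm_eq_zero_of_not_injective hψ hv, norm_zero, zero_pow two_ne_zero]

theorem stmt_13_general (n : ℕ)
    (ψ : Matrix (Fin n) (Fin n) ℂ) (hψ : ψ.transpose = -ψ)
    (g : Matrix (Fin n) (Fin n) ℂ) (hg : g * g.conjTranspose = 1)
    (ψ' : Matrix (Fin n) (Fin n) ℂ) (hψ' : ψ' = g * ψ * g.transpose) :
    ∑ q ∈ Finset.univ.filter
        (fun q : Fin n × Fin n × Fin n × Fin n =>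
          q.1 < q.2.1 ∧ q.2.1 < q.2.2.1 ∧ q.2.2.1 < q.2.2.2),
      ‖ψ' q.1 q.2.1 * ψ' q.2.2.1 q.2.2.2
        + ψ' q.1 q.2.2.1 * ψ' q.2.2.2 q.2.1
        + ψ' q.1 q.2.2.2 * ψ' q.2.1 q.2.2.1‖ ^ 2
    = ∑ q ∈ Finset.univ.filter
        (fun q : Fin n × Fin n × Fin n × Fin n =>
          q.1 < q.2.1 ∧ q.2.1 < q.2.2.1 ∧ q.2.2.1 < q.2.2.2),
      ‖ψ q.1 q.2.1 * ψ q.2.2.1 q.2.2.2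
        + ψ q.1 q.2.2.1 * ψ q.2.2.2 q.2.1
        + ψ q.1 q.2.2.2 * ψ q.2.1 q.2.2.1‖ ^ 2 := by
  have hψ'_antisymm : ψ'ᵀ = -ψ' := by
    rw [hψ', transpose_mul, transpose_mul, transpose_transpose, hψ, Matrix.neg_mul,
      Matrix.mul_neg, Matrix.mul_assoc]
  have hinv : ∑ v, ‖pluckerForm ψ' v‖ ^ 2 = ∑ v, ‖pluckerForm ψ v‖ ^ 2 := by
    rw [hψ', pluckerForm_mul_mul_transpose]
    exact sum_norm_sq_mulVec_of_mul_conjTranspose_eq_one (tensorPow_mul_conjTranspose hg) _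
  rw [sum_norm_sq_pluckerForm hψ'_antisymm, sum_norm_sq_pluckerForm hψ] at hinv
  exact mul_left_cancel₀ (by norm_num) hinv

/-- the quantity
`Σ_{i<j<k<l} |ψ_{ij}ψ_{kl} + ψ_{ik}ψ_{lj} + ψ_{il}ψ_{jk}|²` of an antisymmetric
matrix `ψ` is invariant under `ψ ↦ gψgᵀ` for unitary `g`. -/
theorem stmt_13 (n : ℕ) (hn : 1 ≤ n)
    (ψ : Matrix (Fin n) (Fin n) ℂ) (hψ : ψ.transpose = -ψ)
    (g : Matrix (Fin n) (Fin n) ℂ) (hg : g * g.conjTranspose = 1)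
    (ψ' : Matrix (Fin n) (Fin n) ℂ) (hψ' : ψ' = g * ψ * g.transpose) :
    ∑ q ∈ Finset.univ.filter
        (fun q : Fin n × Fin n × Fin n × Fin n =>
          q.1 < q.2.1 ∧ q.2.1 < q.2.2.1 ∧ q.2.2.1 < q.2.2.2),
      ‖ψ' q.1 q.2.1 * ψ' q.2.2.1 q.2.2.2
        + ψ' q.1 q.2.2.1 * ψ' q.2.2.2 q.2.1
        + ψ' q.1 q.2.2.2 * ψ' q.2.1 q.2.2.1‖ ^ 2
    = ∑ q ∈ Finset.univ.filter
        (fun q : Fin n × Fin n × Fin n × Fin n =>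
          q.1 < q.2.1 ∧ q.2.1 < q.2.2.1 ∧ q.2.2.1 < q.2.2.2),
      ‖ψ q.1 q.2.1 * ψ q.2.2.1 q.2.2.2
        + ψ q.1 q.2.2.1 * ψ q.2.2.2 q.2.1
        + ψ q.1 q.2.2.2 * ψ q.2.1 q.2.2.1‖ ^ 2 :=
  stmt_13_general n ψ hψ g hg ψ' hψ'
end

section
/- Define, for coefficients ψ : {0,1}×{0,1}×{0,1} → ℂ, the quantity F(ψ) = Σ_{i,j,k∈{0,1}} |ψ_{ijk}|⁴ + 2·Σ_{i,j∈{0,1}} (|ψ_{ij0}ψ_{ij1}|² + |ψ_{i0j}ψ_{i1j}|² + |ψ_{0ij}ψ_{1ij}|²) + Σ_{i∈{0,1}} ( |ψ_{i01}ψ_{i10}|² + (1/3)|ψ_{i01}ψ_{i10} + 2ψ_{i00}ψ_{i11}|² + |ψ_{0i1}ψ_{1i0}|² + (1/3)|ψ_{0i1}ψ_{1i0} + 2ψ_{0i0}ψ_{1i1}|² + |ψ_{01i}ψ_{10i}|² + (1/3)|ψ_{01i}ψ_{10i} + 2ψ_{00i}ψ_{11i}|² ) + (1/2)|ψ_{000}ψ_{111}|²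 + (1/6)|ψ_{000}ψ_{111} + 2ψ_{001}ψ_{110}|² + (1/6)|ψ_{000}ψ_{111} + 2ψ_{011}ψ_{100}|² + (1/18)|ψ_{000}ψ_{111} − 2ψ_{001}ψ_{110} − 2ψ_{011}ψ_{100}|² + (1/9)|ψ_{000}ψ_{111} + ψ_{001}ψ_{110} + 3ψ_{010}ψ_{101} + ψ_{011}ψ_{100}|². Then: (1) if ψ_{000} = 1 and all other coefficients are 0 (a separable product state), F(ψ) = 1; (2) if ψ_{000} = ψ_{111} = 1/√2 and all other coefficients are 0 (the GHZ state), F(ψ) = 3/4; (3) if ψ_{001} = ψ_{010} = ψ_{100} = 1/√3 and all other coefficients are 0 (the W state), F(ψ) = 7/9; (4) if ψ_{000} = ψ_{011} = 1/√2 and all other coefficients are 0 (a biseparable state with a maximally entangled pair), F(ψ) = 5/6. -/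
/-!
`F` is a real quartic form of bidegree `(2, 2)` in `ψ` and `conj ψ`, so scaling a state by `c`
multiplies `F` by `‖c‖ ^ 4`. Each of the four states is a normalisation constant times a
`0`/`1` vector, on which `F` is a rational number that can be read off term by term.
-/

/-- The restriction `F` of the fermionic invariant `I_{(2,2,2)}` to
three-qubit states with coefficients `ψ_{ijk}`. -/
noncomputable def threeQubitInv (ψ : Fin 2 → Fin 2 → Fin 2 → ℂ) : ℝ :=
  (∑ i : Fin 2, ∑ j : Fin 2, ∑ k : Fin 2, ‖ψ i j k‖ ^ 4)
  + 2 * ∑ i : Fin 2, ∑ j : Fin 2,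
      (‖ψ i j 0 * ψ i j 1‖ ^ 2
        + ‖ψ i 0 j * ψ i 1 j‖ ^ 2
        + ‖ψ 0 i j * ψ 1 i j‖ ^ 2)
  + ∑ i : Fin 2,
      (‖ψ i 0 1 * ψ i 1 0‖ ^ 2
        + (1 / 3) * ‖ψ i 0 1 * ψ i 1 0 + 2 * ψ i 0 0 * ψ i 1 1‖ ^ 2
        + ‖ψ 0 i 1 * ψ 1 i 0‖ ^ 2
        + (1 / 3) * ‖ψ 0 i 1 * ψ 1 i 0 + 2 * ψ 0 i 0 * ψ 1 i 1‖ ^ 2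
        + ‖ψ 0 1 i * ψ 1 0 i‖ ^ 2
        + (1 / 3) * ‖ψ 0 1 i * ψ 1 0 i + 2 * ψ 0 0 i * ψ 1 1 i‖ ^ 2)
  + (1 / 2) * ‖ψ 0 0 0 * ψ 1 1 1‖ ^ 2
  + (1 / 6) * ‖ψ 0 0 0 * ψ 1 1 1 + 2 * ψ 0 0 1 * ψ 1 1 0‖ ^ 2
  + (1 / 6) * ‖ψ 0 0 0 * ψ 1 1 1 + 2 * ψ 0 1 1 * ψ 1 0 0‖ ^ 2
  + (1 / 18) * ‖
      ψ 0 0 0 * ψ 1 1 1 - 2 * ψ 0 0 1 * ψ 1 1 0 - 2 * ψ 0 1 1 * ψ 1 0 0‖ ^ 2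
  + (1 / 9) * ‖
      ψ 0 0 0 * ψ 1 1 1 + ψ 0 0 1 * ψ 1 1 0
        + 3 * ψ 0 1 0 * ψ 1 0 1 + ψ 0 1 1 * ψ 1 0 0‖ ^ 2

theorem threeQubitInv_const_mul (c : ℂ) (ψ : Fin 2 → Fin 2 → Fin 2 → ℂ) :
    threeQubitInv (fun i j k => c * ψ i j k) = ‖c‖ ^ 4 * threeQubitInv ψ := by
  have h4 : ∀ z : ℂ, ‖z‖ ^ 4 = (‖z‖ ^ 2) ^ 2 := fun z => by ring
  -- Over `ℂ`, each `‖z‖ ^ 2` becomes `z * conj z`, so both sides are polynomials in `c`, `ψ`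
  -- and their conjugates.
  apply Complex.ofReal_injective
  simp only [threeQubitInv, Fin.sum_univ_two, h4]
  push_cast
  simp only [← Complex.mul_conj', map_add, map_mul, map_sub, map_ofNat]
  ring

theorem threeQubitInv_ite_const (P : Fin 2 → Fin 2 → Fin 2 → Prop)
    [∀ i j k, Decidable (P i j k)] (c : ℂ) :
    threeQubitInv (fun i j k => if P i j k then c else 0) =
      ‖c‖ ^ 4 * threeQubitInv (fun i j k => if P i j k then 1 else 0) := by
  have hψ : (fun i j k => if P i j k then c else 0) =
      fun i j k => c * if P i j k then 1 else 0 := by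
    funext i j k
    rw [mul_ite, mul_one, mul_zero]
  rw [hψ, threeQubitInv_const_mul]

theorem norm_inv_sqrt_pow_four {x : ℝ} (hx : 0 ≤ x) :
    ‖((√x : ℝ) : ℂ)⁻¹‖ ^ 4 = (x ^ 2)⁻¹ := by
  rw [norm_inv, Complex.norm_real, Real.norm_of_nonneg (Real.sqrt_nonneg x), inv_pow,
    show (4 : ℕ) = 2 * 2 from rfl, pow_mul, Real.sq_sqrt hx]

theorem threeQubitInv_product_state :
    threeQubitInv (fun i j k => if i = 0 ∧ j = 0 ∧ k = 0 then 1 else 0) = 1 := by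
  norm_num [threeQubitInv, Fin.sum_univ_two]

theorem threeQubitInv_ghz_unnormalized :
    threeQubitInv (fun i j k =>
      if (i = 0 ∧ j = 0 ∧ k = 0) ∨ (i = 1 ∧ j = 1 ∧ k = 1) then 1 else 0) = 3 := by
  norm_num [threeQubitInv, Fin.sum_univ_two]

theorem threeQubitInv_w_unnormalized :
    threeQubitInv (fun i j k =>
      if (i = 0 ∧ j = 0 ∧ k = 1) ∨ (i = 0 ∧ j = 1 ∧ k = 0) ∨ (i = 1 ∧ j = 0 ∧ k = 0)
        then 1 else 0) = 7 := by
  norm_num [threeQubitInv, Fin.sum_univ_two]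

theorem threeQubitInv_biseparable_unnormalized :
    threeQubitInv (fun i j k =>
      if (i = 0 ∧ j = 0 ∧ k = 0) ∨ (i = 0 ∧ j = 1 ∧ k = 1) then 1 else 0) = 10 / 3 := by
  norm_num [threeQubitInv, Fin.sum_univ_two]

/-- the values of the invariant on a separable state, the GHZ
state, the W state, and a biseparable state with a maximally entangled pair. -/
theorem stmt_18 :
    threeQubitInv (fun i j k => if i = 0 ∧ j = 0 ∧ k = 0 then 1 else 0) = 1 ∧
    threeQubitInv (fun i j k =>
      if (i = 0 ∧ j = 0 ∧ k = 0) ∨ (i = 1 ∧ j = 1 ∧ k = 1)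
        then ((Real.sqrt 2 : ℂ))⁻¹ else 0) = 3 / 4 ∧
    threeQubitInv (fun i j k =>
      if (i = 0 ∧ j = 0 ∧ k = 1) ∨ (i = 0 ∧ j = 1 ∧ k = 0) ∨ (i = 1 ∧ j = 0 ∧ k = 0)
        then ((Real.sqrt 3 : ℂ))⁻¹ else 0) = 7 / 9 ∧
    threeQubitInv (fun i j k =>
      if (i = 0 ∧ j = 0 ∧ k = 0) ∨ (i = 0 ∧ j = 1 ∧ k = 1)
        then ((Real.sqrt 2 : ℂ))⁻¹ else 0) = 5 / 6 := by
  refine ⟨threeQubitInv_product_state, ?_, ?_, ?_⟩ <;>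
    rw [threeQubitInv_ite_const, norm_inv_sqrt_pow_four (by norm_num)]
  · rw [threeQubitInv_ghz_unnormalized]; norm_num
  · rw [threeQubitInv_w_unnormalized]; norm_num
  · rw [threeQubitInv_biseparable_unnormalized]; norm_num
end
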